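/- For every λ ∈ ℂ with Re λ > 1.5 and every z ∈ ℂ with |z| < 1, the point B₂ A_λ z = (z+λ)/(2(z+λ)+1) lies in the disc {w : |w - 1/4| < 1/4}, hence in K₁ = {|w| ≤ 1/2}. -/

import Mathlib

/-! `B₂ A_λ z = B₂ (z + λ)`, and the Möbius map `B₂ : w ↦ w / (2w + 1)` sends the half-plane
`Re w > 0` into the disc `|w - 1/4| < 1/4`: indeed `B₂ w - 1/4 = (2w - 1) / (4 (2w + 1))`, and
`2w` is closer to `1` than to `-1`. For `|z| < 1` and `Re λ > 1.5` we have `Re (z + λ) > 0`,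
and the disc lies in `|w| ≤ 1/2` by the triangle inequality. -/

namespace Complex

theorem norm_sub_one_lt_norm_add_one {a : ℂ} (ha : 0 < a.re) : ‖a - 1‖ < ‖a + 1‖ := by
  have hsq : ‖a - 1‖ ^ 2 < ‖a + 1‖ ^ 2 := by
    simp only [Complex.sq_norm, normSq_apply, sub_re, add_re, sub_im, add_im, one_re, one_im]
    nlinarith
  exact lt_of_pow_lt_pow_left₀ 2 (norm_nonneg _) hsq

theorem two_mul_add_one_ne_zero {w : ℂ} (hw : 0 < w.re) : 2 * w + 1 ≠ 0 := by
  intro h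
  have := congrArg re h
  simp only [add_re, mul_re, re_ofNat, im_ofNat, one_re, zero_re] at this
  linarith

theorem norm_div_two_mul_add_one_sub_quarter_lt {w : ℂ} (hw : 0 < w.re) :
    ‖w / (2 * w + 1) - 1 / 4‖ < 1 / 4 := by
  have hden := two_mul_add_one_ne_zero hw
  have hdiff : w / (2 * w + 1) - 1 / 4 = (2 * w - 1) / (4 * (2 * w + 1)) := by
    rw [div_sub_div _ _ hden (by norm_num : (4 : ℂ) ≠ 0)]
    ring
  have hlt := norm_sub_one_lt_norm_add_one (a := 2 * w) (by simpa using hw)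
  rw [hdiff, norm_div, norm_mul, Complex.norm_ofNat, div_lt_iff₀ (by positivity)]
  linarith

theorem norm_le_half_of_norm_sub_quarter_lt {u : ℂ} (hu : ‖u - 1 / 4‖ < 1 / 4) : ‖u‖ ≤ 1 / 2 := by
  have hquarter : ‖(1 / 4 : ℂ)‖ = 1 / 4 := by norm_num
  have := norm_le_norm_sub_add u (1 / 4)
  linarith

end Complex

theorem stmt_5 (lam : ℂ) (hlam : 1.5 < lam.re) (z : ℂ) (hz : ‖z‖ < 1) :
    ‖(z + lam) / (2 * (z + lam) + 1) - 1 / 4‖ < 1 / 4 ∧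
    ‖(z + lam) / (2 * (z + lam) + 1)‖ ≤ 1 / 2 := by
  have hz_re : -1 < z.re := (abs_lt.mp ((Complex.abs_re_le_norm z).trans_lt hz)).1
  have hw : 0 < (z + lam).re := by
    rw [Complex.add_re]
    linarith
  have hdisc := Complex.norm_div_two_mul_add_one_sub_quarter_lt hw
  exact ⟨hdisc, Complex.norm_le_half_of_norm_sub_quarter_lt hdisc⟩
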